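/- arXiv:1807.04123 — 4 statements merged into one kernel-verified Lean document; each statement's English description precedes it below -/
import Mathlib

section
/- Let ξ, η, ζ : ℝⁿ → ℝⁿ be smooth ℤⁿ-periodic vector fields with div ξ = 0. Then ∫_{[0,1]ⁿ} ⟨η(x), (∇_ξζ)(x) − (∇_ζξ)(x)⟩ dx = −∫_{[0,1]ⁿ} ⟨(∇_ξη)(x) + (ξ'⊗η)(x), ζ(x)⟩ dx. (This is the L²-pairing form of Lemma 1 of the paper: ad*(ξ)·μ̌(η) = −μ̌(∇_ξη + ξ'⊗η), equivalently ad⊤(ξ)·η = −P(∇_ξη + ξ'⊗η) paired against divergence-free ζ.) -/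
noncomputable section
open MeasureTheory

/-- Euclidean dot product on `Fin n → ℝ`. -/
def dotp {n : ℕ} (v w : Fin n → ℝ) : ℝ := ∑ i, v i * w i

/-- Advective derivative `(∇_X ξ)(x) = Dξ(x)·X(x)`. -/
def advDeriv {n : ℕ} (X ξ : (Fin n → ℝ) → (Fin n → ℝ)) (x : Fin n → ℝ) : Fin n → ℝ :=
  fderiv ℝ ξ x (X x)

/-- Line stretching term `(X'⊗ξ)(x) = (DX(x))ᵀ·ξ(x)`. -/
def lineStretch {n : ℕ} (X ξ : (Fin n → ℝ) → (Fin n → ℝ)) (x : Fin n → ℝ) : Fin n → ℝ :=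
  fun i => ∑ j, fderiv ℝ X x (Pi.single i 1) j * ξ x j

/-- Divergence of a vector field. -/
def diver {n : ℕ} (ξ : (Fin n → ℝ) → (Fin n → ℝ)) (x : Fin n → ℝ) : ℝ :=
  ∑ i, fderiv ℝ ξ x (Pi.single i 1) i

/-- Gradient of a scalar function. -/
def gradf {n : ℕ} (f : (Fin n → ℝ) → ℝ) (x : Fin n → ℝ) : Fin n → ℝ :=
  fun i => fderiv ℝ f x (Pi.single i 1)

/-- Componentwise Laplacian. -/
def lap {n : ℕ} (ξ : (Fin n → ℝ) → (Fin n → ℝ)) (x : Fin n → ℝ) : Fin n → ℝ :=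
  ∑ j, fderiv ℝ (fun y => fderiv ℝ ξ y (Pi.single j 1)) x (Pi.single j 1)

/-- The unit cube `[0,1]ⁿ`, realizing the torus `ℝⁿ/ℤⁿ`. -/
def cube (n : ℕ) : Set (Fin n → ℝ) := Set.univ.pi fun _ => Set.Icc (0:ℝ) 1

/-- `ℤⁿ`-periodicity. -/
def ZPeriodic {n : ℕ} {α : Type*} (f : (Fin n → ℝ) → α) : Prop :=
  ∀ (x : Fin n → ℝ) (m : Fin n → ℤ), f (x + fun i => (m i : ℝ)) = f x

/-!
With `f = ⟨η, ζ⟩`, the two integrands add up pointwise to `⟨∇f, ξ⟩ = div (f ξ) - f div ξ`: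
the line-stretching term satisfies `⟨ξ'⊗η, ζ⟩ = ⟨η, ∇_ζ ξ⟩` and cancels the `∇_ζ ξ` term.
As `div ξ = 0`, the sum is the divergence of the periodic field `f ξ`, whose integral over the
unit cube vanishes by the divergence theorem, since the fluxes through opposite faces cancel.
-/

theorem ContinuousLinearMap.apply_eq_sum_single {ι R M : Type*} [Fintype ι] [DecidableEq ι]
    [Semiring R] [TopologicalSpace R] [AddCommMonoid M] [Module R M] [TopologicalSpace M]
    (L : (ι → R) →L[R] M) (v : ι → R) :
    L v = ∑ i, v i • L (Pi.single i 1) := by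
  conv_lhs => rw [pi_eq_sum_univ' v]
  simp only [map_sum, map_smul]

section VectorCalculus

variable {n : ℕ}

lemma dotp_eq_dotProduct (v w : Fin n → ℝ) : dotp v w = v ⬝ᵥ w := rfl

lemma lineStretch_dotProduct (X η : (Fin n → ℝ) → (Fin n → ℝ)) (x v : Fin n → ℝ) :
    lineStretch X η x ⬝ᵥ v = η x ⬝ᵥ fderiv ℝ X x v := by
  simp only [dotProduct, lineStretch, (fderiv ℝ X x).apply_eq_sum_single v, Finset.sum_apply,
    Pi.smul_apply, smul_eq_mul, Finset.sum_mul, Finset.mul_sum]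
  rw [Finset.sum_comm]
  exact Finset.sum_congr rfl fun _ _ => Finset.sum_congr rfl fun _ _ => by ring

lemma fderiv_dotp_apply {η ζ : (Fin n → ℝ) → (Fin n → ℝ)} {x : Fin n → ℝ}
    (hη : DifferentiableAt ℝ η x) (hζ : DifferentiableAt ℝ ζ x) (v : Fin n → ℝ) :
    fderiv ℝ (fun y => dotp (η y) (ζ y)) x v
      = dotp (fderiv ℝ η x v) (ζ x) + dotp (η x) (fderiv ℝ ζ x v) := by
  have hηk (k : Fin n) : DifferentiableAt ℝ (fun y => η y k) x := by fun_prop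
  have hζk (k : Fin n) : DifferentiableAt ℝ (fun y => ζ y k) x := by fun_prop
  simp only [dotp]
  rw [fderiv_fun_sum (A := fun k y => η y k * ζ y k) fun k _ => (hηk k).mul (hζk k)]
  simp only [FunLike.coe_sum, Finset.sum_apply, fderiv_fun_mul (hηk _) (hζk _),
    fderiv_apply hη, fderiv_apply hζ, ← Finset.sum_add_distrib]
  refine Finset.sum_congr rfl fun k _ => ?_
  simp only [add_apply, smul_apply, ContinuousLinearMap.comp_apply, ContinuousLinearMap.proj_apply,
    smul_eq_mul]
  ring

lemma diver_smul {f : (Fin n → ℝ) → ℝ} {ξ : (Fin n → ℝ) → (Fin n → ℝ)} {x : Fin n → ℝ}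
    (hf : DifferentiableAt ℝ f x) (hξ : DifferentiableAt ℝ ξ x) :
    diver (fun y => f y • ξ y) x = f x * diver ξ x + fderiv ℝ f x (ξ x) := by
  simp only [diver, fderiv_fun_smul hf hξ, add_apply, smul_apply,
    ContinuousLinearMap.smulRight_apply, Pi.add_apply, Pi.smul_apply, smul_eq_mul,
    Finset.sum_add_distrib, ← Finset.mul_sum]
  rw [(fderiv ℝ f x).apply_eq_sum_single (ξ x)]
  simp only [smul_eq_mul, mul_comm]

lemma DifferentiableAt.dotp {η ζ : (Fin n → ℝ) → (Fin n → ℝ)} {x : Fin n → ℝ}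
    (hη : DifferentiableAt ℝ η x) (hζ : DifferentiableAt ℝ ζ x) :
    DifferentiableAt ℝ (fun y => dotp (η y) (ζ y)) x := by
  unfold _root_.dotp; fun_prop

lemma ContDiff.dotp {k : WithTop ℕ∞} {η ζ : (Fin n → ℝ) → (Fin n → ℝ)}
    (hη : ContDiff ℝ k η) (hζ : ContDiff ℝ k ζ) :
    ContDiff ℝ k (fun y => dotp (η y) (ζ y)) := by
  unfold _root_.dotp; fun_prop

lemma Continuous.dotp {η ζ : (Fin n → ℝ) → (Fin n → ℝ)}
    (hη : Continuous η) (hζ : Continuous ζ) :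
    Continuous (fun y => dotp (η y) (ζ y)) := by
  unfold _root_.dotp; fun_prop

lemma dotp_bracket_add_dotp_coadjoint {ξ η ζ : (Fin n → ℝ) → (Fin n → ℝ)} {x : Fin n → ℝ}
    (hξ : DifferentiableAt ℝ ξ x) (hη : DifferentiableAt ℝ η x) (hζ : DifferentiableAt ℝ ζ x) :
    dotp (η x) (advDeriv ξ ζ x - advDeriv ζ ξ x) + dotp (advDeriv ξ η x + lineStretch ξ η x) (ζ x)
      = diver (fun y => dotp (η y) (ζ y) • ξ y) x - dotp (η x) (ζ x) * diver ξ x := by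
  rw [diver_smul (hη.dotp hζ) hξ, fderiv_dotp_apply hη hζ]
  simp only [advDeriv, dotp_eq_dotProduct, dotProduct_sub, add_dotProduct, lineStretch_dotProduct]
  ring

lemma continuous_diver {g : (Fin n → ℝ) → (Fin n → ℝ)} (hg : ContDiff ℝ 1 g) :
    Continuous (diver g) := by
  have := hg.continuous_fderiv one_ne_zero
  unfold diver; fun_prop

lemma continuous_advDeriv {X ξ : (Fin n → ℝ) → (Fin n → ℝ)} (hX : Continuous X)
    (hξ : ContDiff ℝ 1 ξ) : Continuous (advDeriv X ξ) := by
  have := hξ.continuous_fderiv one_ne_zero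
  unfold advDeriv; fun_prop

lemma continuous_lineStretch {X η : (Fin n → ℝ) → (Fin n → ℝ)} (hX : ContDiff ℝ 1 X)
    (hη : Continuous η) : Continuous (lineStretch X η) := by
  have := hX.continuous_fderiv one_ne_zero
  unfold lineStretch; fun_prop

lemma cube_eq_Icc : cube n = Set.Icc 0 1 := by
  rw [cube, ← Set.pi_univ_Icc]; rfl

lemma Continuous.integrableOn_cube {f : (Fin n → ℝ) → ℝ} (hf : Continuous f) :
    IntegrableOn f (cube n) :=
  cube_eq_Icc ▸ hf.integrableOn_Icc

lemma ZPeriodic.apply_insertNth_one {α : Type*} {g : (Fin (n + 1) → ℝ) → α}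
    (hg : ZPeriodic g) (i : Fin (n + 1)) (x : Fin n → ℝ) :
    g (i.insertNth 1 x) = g (i.insertNth 0 x) := by
  rw [← hg (i.insertNth 0 x) (Pi.single i 1)]
  congr 1
  funext j
  rcases eq_or_ne j i with rfl | hj
  · simp
  · obtain ⟨k, rfl⟩ := Fin.exists_succAbove_eq hj
    simp [hj]

theorem integral_cube_diver_eq_zero {g : (Fin n → ℝ) → (Fin n → ℝ)}
    (hg : ContDiff ℝ 1 g) (hgp : ZPeriodic g) :
    ∫ x in cube n, diver g x = 0 := by
  cases n with
  | zero => simp [diver]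
  | succ n =>
    rw [cube_eq_Icc]
    unfold diver
    rw [integral_divergence_of_hasFDerivAt_off_countable 0 1 zero_le_one g (fderiv ℝ g) ∅
      Set.countable_empty hg.continuous.continuousOn
      (fun x _ => (hg.differentiable one_ne_zero x).hasFDerivAt)
      (continuous_diver hg).integrableOn_Icc]
    refine Finset.sum_eq_zero fun i _ => ?_
    simp only [Pi.one_apply, Pi.zero_apply, hgp.apply_insertNth_one, sub_self]

end VectorCalculus

/-- L²-pairing form of Lemma 1 of the paper:
`∫ ⟨η, ∇_ξζ − ∇_ζξ⟩ = −∫ ⟨∇_ξη + ξ'⊗η, ζ⟩` on the torus, for smooth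
ℤⁿ-periodic fields with `div ξ = 0`. -/
theorem stmt0 {n : ℕ} (ξ η ζ : (Fin n → ℝ) → (Fin n → ℝ))
    (hξ : ContDiff ℝ (⊤:ℕ∞) ξ) (hη : ContDiff ℝ (⊤:ℕ∞) η) (hζ : ContDiff ℝ (⊤:ℕ∞) ζ)
    (hξp : ZPeriodic ξ) (hηp : ZPeriodic η) (hζp : ZPeriodic ζ)
    (hdiv : ∀ x, diver ξ x = 0) :
    ∫ x in cube n, dotp (η x) (advDeriv ξ ζ x - advDeriv ζ ξ x) =
      - ∫ x in cube n, dotp (advDeriv ξ η x + lineStretch ξ η x) (ζ x) := by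
  have one_le : (1 : WithTop ℕ∞) ≤ (⊤ : ℕ∞) := by exact_mod_cast le_top
  replace hξ := hξ.of_le one_le
  replace hη := hη.of_le one_le
  replace hζ := hζ.of_le one_le
  have hflux (x) : dotp (η x) (advDeriv ξ ζ x - advDeriv ζ ξ x)
      + dotp (advDeriv ξ η x + lineStretch ξ η x) (ζ x)
      = diver (fun y => dotp (η y) (ζ y) • ξ y) x := by
    rw [dotp_bracket_add_dotp_coadjoint (hξ.differentiable one_ne_zero x)
      (hη.differentiable one_ne_zero x) (hζ.differentiable one_ne_zero x), hdiv x, mul_zero,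
      sub_zero]
  have hperiodic : ZPeriodic (fun y => dotp (η y) (ζ y) • ξ y) := fun x m => by
    simp only [hξp x m, hηp x m, hζp x m]
  have hint_bracket := (hη.continuous.dotp ((continuous_advDeriv hξ.continuous hζ).fun_sub
    (continuous_advDeriv hζ.continuous hξ))).integrableOn_cube
  have hint_coadjoint := (((continuous_advDeriv hξ.continuous hη).fun_add
    (continuous_lineStretch hξ hη.continuous)).dotp hζ.continuous).integrableOn_cube
  rw [eq_neg_iff_add_eq_zero, ← integral_add hint_bracket hint_coadjoint]
  simp_rw [hflux]
  exact integral_cube_diver_eq_zero ((hη.dotp hζ).smul hξ) hperiodic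
end
end

section
/- Let k, v ∈ ℝⁿ with ⟨k,v⟩ = 0, and define A(x) = cos⟨k,x⟩ v and B(x) = sin⟨k,x⟩ v. Then for every C¹ vector field ξ : ℝⁿ → ℝⁿ and every x ∈ ℝⁿ: (∇_A(A'⊗ξ))(x) + (∇_B(B'⊗ξ))(x) = 0 (the pairwise cancellation underlying equation Σ_α ∇_{X_α}(X_α'⊗ξ) = 0 in the paper). -/
noncomputable section
open MeasureTheory

/-!
For a plane wave `X y = s ⟨k, y⟩ v` the line-stretching term is
`X' ⊗ ξ = s'(⟨k, y⟩) ⟨v, ξ⟩ k`. Transporting it along `X x`, which is orthogonal to `k`, only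
differentiates the factor `⟨v, ξ⟩`, giving `s s' ⟨v, Dξ v⟩ k`. For `s = cos` and `s = sin` the
scalar factors `s s'` are `-cos sin` and `sin cos`, which cancel.
-/

section PlaneWave

variable {n : ℕ}

def dotpCLM (k : Fin n → ℝ) : (Fin n → ℝ) →L[ℝ] ℝ :=
  ∑ i, k i • ContinuousLinearMap.proj i

@[simp]
lemma dotpCLM_apply (k h : Fin n → ℝ) : dotpCLM k h = dotp k h := by
  simp [dotpCLM, dotp]

lemma hasFDerivAt_dotp (k x : Fin n → ℝ) : HasFDerivAt (dotp k) (dotpCLM k) x := by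
  have h : dotp k = dotpCLM k := funext fun y => (dotpCLM_apply k y).symm
  exact h ▸ (dotpCLM k).hasFDerivAt

lemma dotp_single_right (k : Fin n → ℝ) (i : Fin n) : dotp k (Pi.single i 1) = k i := by
  simp [dotp, Pi.single_apply]

lemma fderiv_planeWave {s : ℝ → ℝ} (k v x : Fin n → ℝ) (hs : DifferentiableAt ℝ s (dotp k x)) :
    fderiv ℝ (fun y => s (dotp k y) • v) x = (deriv s (dotp k x) • dotpCLM k).smulRight v :=
  ((hs.hasDerivAt.comp_hasFDerivAt x (hasFDerivAt_dotp k x)).smul_const v).fderiv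

lemma lineStretch_planeWave {s : ℝ → ℝ} (hs : Differentiable ℝ s) (k v : Fin n → ℝ)
    (ξ : (Fin n → ℝ) → (Fin n → ℝ)) :
    lineStretch (fun y => s (dotp k y) • v) ξ =
      fun y => (deriv s (dotp k y) * dotp v (ξ y)) • k := by
  funext y i
  simp only [lineStretch, fderiv_planeWave k v y (hs _), ContinuousLinearMap.smulRight_apply,
    smul_apply, Pi.smul_apply, dotpCLM_apply, dotp_single_right, smul_eq_mul]
  simp only [dotp, Finset.mul_sum, Finset.sum_mul]
  exact Finset.sum_congr rfl fun j _ => by ring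

lemma advDeriv_lineStretch_planeWave {s : ℝ → ℝ} (hs : Differentiable ℝ s) {k v : Fin n → ℝ}
    (hkv : dotp k v = 0) {ξ : (Fin n → ℝ) → (Fin n → ℝ)} {x : Fin n → ℝ}
    (hs' : DifferentiableAt ℝ (deriv s) (dotp k x)) (hξ : DifferentiableAt ℝ ξ x) :
    advDeriv (fun y => s (dotp k y) • v) (lineStretch (fun y => s (dotp k y) • v) ξ) x =
      (s (dotp k x) * deriv s (dotp k x) * dotp v (fderiv ℝ ξ x v)) • k := by
  have hwave :
      HasFDerivAt (fun y => deriv s (dotp k y)) (deriv (deriv s) (dotp k x) • dotpCLM k) x :=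
    hs'.hasDerivAt.comp_hasFDerivAt x (hasFDerivAt_dotp k x)
  have hamp : HasFDerivAt (fun y => dotp v (ξ y)) ((dotpCLM v).comp (fderiv ℝ ξ x)) x :=
    (hasFDerivAt_dotp v (ξ x)).comp x hξ.hasFDerivAt
  have hstretch : HasFDerivAt (fun y => (deriv s (dotp k y) * dotp v (ξ y)) • k) _ x :=
    (hwave.mul hamp).smul_const k
  rw [advDeriv, lineStretch_planeWave hs, hstretch.fderiv]
  -- the derivative of the wave factor is taken along `k`, and `⟨k, s v⟩ = 0`
  simp only [ContinuousLinearMap.smulRight_apply, add_apply, smul_apply,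
    ContinuousLinearMap.comp_apply, dotpCLM_apply, hkv, map_smul, smul_eq_mul, smul_smul]
  congr 1
  ring

end PlaneWave

/-- the pairwise cancellation `∇_A(A'⊗ξ) + ∇_B(B'⊗ξ) = 0`
underlying `Σ_α ∇_{X_α}(X_α'⊗ξ) = 0` in the paper. -/
theorem stmt3 {n : ℕ} (k v : Fin n → ℝ) (hkv : dotp k v = 0)
    (A B : (Fin n → ℝ) → (Fin n → ℝ))
    (hA : ∀ x, A x = Real.cos (dotp k x) • v)
    (hB : ∀ x, B x = Real.sin (dotp k x) • v)
    (ξ : (Fin n → ℝ) → (Fin n → ℝ)) (hξ : ContDiff ℝ 1 ξ) (x : Fin n → ℝ) :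
    advDeriv A (lineStretch A ξ) x + advDeriv B (lineStretch B ξ) x = 0 := by
  obtain rfl : A = fun y => Real.cos (dotp k y) • v := funext hA
  obtain rfl : B = fun y => Real.sin (dotp k y) • v := funext hB
  have hξx : DifferentiableAt ℝ ξ x := hξ.differentiable one_ne_zero x
  rw [advDeriv_lineStretch_planeWave Real.differentiable_cos hkv (by simp) hξx,
    advDeriv_lineStretch_planeWave Real.differentiable_sin hkv (by simp) hξx,
    Real.deriv_cos', Real.deriv_sin, ← add_smul]
  convert zero_smul ℝ k using 2
  ring
end
end

section
/- Let k, v ∈ ℝⁿ with ⟨k,v⟩ = 0, and define A(x) = cos⟨k,x⟩ v and B(x) = sin⟨k,x⟩ v. Then for every C² vector field ξ : ℝⁿ → ℝⁿ and every x ∈ ℝⁿ: (∇_A(∇_Aξ))(x) + (∇_B(∇_Bξ))(x) = D²ξ(x)(v, v), the second derivative of ξ at x evaluated twice in the direction v. -/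
/-!
By the product rule, `∇_X(∇_X ξ)(x) = D²ξ(x)(X x, X x) + Dξ(x)(DX(x) X(x))`. For a plane wave
`X y = f⟨k, y⟩ v` with `⟨k, v⟩ = 0`, the field is constant along `v`, so `DX(x) v = 0` and the
first-order term vanishes, leaving `f⟨k, x⟩² D²ξ(x)(v, v)`. Adding the cosine and sine waves gives
`(cos² + sin²) D²ξ(x)(v, v)`.
-/

noncomputable section
open MeasureTheory

section General

variable {E F : Type*} [NormedAddCommGroup E] [NormedSpace ℝ E]
  [NormedAddCommGroup F] [NormedSpace ℝ F]

theorem fderiv_apply_eq_zero_of_forall_add_smul_eq {X : E → F} {x v : E}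
    (hX : ∀ t : ℝ, X (x + t • v) = X x) : fderiv ℝ X x v = 0 := by
  by_cases hdiff : DifferentiableAt ℝ X x
  · rw [← hdiff.lineDeriv_eq_fderiv, lineDeriv]
    simp only [hX, deriv_const]
  · simp [fderiv_zero_of_not_differentiableAt hdiff]

theorem fderiv_fderiv_apply_self_eq {X : E → E} {ξ : E → F} {x : E}
    (hξ : DifferentiableAt ℝ (fderiv ℝ ξ) x) (hX : DifferentiableAt ℝ X x)
    (hXX : fderiv ℝ X x (X x) = 0) :
    fderiv ℝ (fun y => fderiv ℝ ξ y (X y)) x (X x) = fderiv ℝ (fderiv ℝ ξ) x (X x) (X x) := by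
  rw [fderiv_clm_apply hξ hX]
  simp [hXX]

theorem fderiv_fderiv_apply_const {ξ : E → F} {x : E} (hξ : DifferentiableAt ℝ (fderiv ℝ ξ) x)
    (v : E) : fderiv ℝ (fun y => fderiv ℝ ξ y v) x v = fderiv ℝ (fderiv ℝ ξ) x v v :=
  fderiv_fderiv_apply_self_eq (X := fun _ => v) hξ (differentiableAt_const v) (by simp)

end General

section PlaneWave

variable {n : ℕ} {k v : Fin n → ℝ}

theorem dotp_add_smul (k y v : Fin n → ℝ) (t : ℝ) :
    dotp k (y + t • v) = dotp k y + t * dotp k v := by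
  simp only [dotp, Pi.add_apply, Pi.smul_apply, smul_eq_mul, mul_add, Finset.sum_add_distrib,
    Finset.mul_sum]
  congr 1
  exact Finset.sum_congr rfl fun i _ => by ring

theorem differentiable_dotp (k : Fin n → ℝ) : Differentiable ℝ (dotp k) := by
  unfold dotp
  fun_prop

theorem fderiv_planeWave_apply_self (f : ℝ → ℝ) (hkv : dotp k v = 0) (x : Fin n → ℝ) :
    fderiv ℝ (fun y => f (dotp k y) • v) x (f (dotp k x) • v) = 0 := by
  have hv : fderiv ℝ (fun y => f (dotp k y) • v) x v = 0 :=
    fderiv_apply_eq_zero_of_forall_add_smul_eq fun t => by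
      rw [dotp_add_smul, hkv, mul_zero, add_zero]
  rw [map_smul, hv, smul_zero]

theorem advDeriv_advDeriv_planeWave {f : ℝ → ℝ} (hf : Differentiable ℝ f) (hkv : dotp k v = 0)
    {ξ : (Fin n → ℝ) → (Fin n → ℝ)} {x : Fin n → ℝ}
    (hξ : DifferentiableAt ℝ (fderiv ℝ ξ) x) :
    advDeriv (fun y => f (dotp k y) • v) (advDeriv (fun y => f (dotp k y) • v) ξ) x
      = f (dotp k x) ^ 2 • fderiv ℝ (fderiv ℝ ξ) x v v := by
  have hX : DifferentiableAt ℝ (fun y => f (dotp k y) • v) x :=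
    ((hf.comp (differentiable_dotp k)).smul_const v) x
  unfold advDeriv
  rw [fderiv_fderiv_apply_self_eq hξ hX (fderiv_planeWave_apply_self f hkv x)]
  simp only [map_smul, smul_apply, smul_smul, sq]

end PlaneWave

/-- `∇_A(∇_Aξ) + ∇_B(∇_Bξ) = D²ξ(x)(v,v)`. -/
theorem stmt6 {n : ℕ} (k v : Fin n → ℝ) (hkv : dotp k v = 0)
    (A B : (Fin n → ℝ) → (Fin n → ℝ))
    (hA : ∀ x, A x = Real.cos (dotp k x) • v)
    (hB : ∀ x, B x = Real.sin (dotp k x) • v)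
    (ξ : (Fin n → ℝ) → (Fin n → ℝ)) (hξ : ContDiff ℝ 2 ξ) (x : Fin n → ℝ) :
    advDeriv A (advDeriv A ξ) x + advDeriv B (advDeriv B ξ) x
      = fderiv ℝ (fun y => fderiv ℝ ξ y v) x v := by
  obtain rfl : A = fun y => Real.cos (dotp k y) • v := funext hA
  obtain rfl : B = fun y => Real.sin (dotp k y) • v := funext hB
  have hξ' : DifferentiableAt ℝ (fderiv ℝ ξ) x :=
    (hξ.fderiv_right (m := 1) (by norm_num)).differentiable one_ne_zero x
  rw [advDeriv_advDeriv_planeWave Real.differentiable_cos hkv hξ',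
    advDeriv_advDeriv_planeWave Real.differentiable_sin hkv hξ', ← add_smul,
    Real.cos_sq_add_sin_sq, one_smul, fderiv_fderiv_apply_const hξ']
end
end

section
/- (Deterministic transport identity behind the Kelvin Circulation Theorem, Proposition 4 of the paper.) Let v : [0,T] × ℝⁿ → ℝⁿ and ξ : [0,T] × ℝⁿ → ℝⁿ be smooth, let g : [0,T] × ℝⁿ → ℝⁿ be smooth with ∂_t g(t,x) = v(t, g(t,x)) for all (t,x), and let c : [0,1] → ℝⁿ be a smooth curve. Then for all t ∈ [0,T]: d/dt ∫₀¹ ⟨ξ(t, g(t, c(s))), ∂_s(g(t, c(s)))⟩ ds = ∫₀¹ ⟨(∂_t ξ + ∇_{v}ξ + v'⊗ξ)(t, g(t, c(s))), ∂_s(g(t, c(s)))⟩ ds. -/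
/-!
Write `γ_τ = g τ ∘ c`. Pointwise in `s`, the chain rule differentiates `τ ↦ ξ(τ, γ_τ(s))` to
`∂_t ξ + ∇_v ξ`, and because the mixed partials of `(τ, s) ↦ g(τ, c(s))` commute,
`∂_τ ∂_s γ_τ(s) = ∂_s v(τ, γ_τ(s)) = Dv · ∂_s γ_τ(s)`, which paired with `ξ` is the line-stretching
term `v' ⊗ ξ`. This pointwise derivative is continuous on `[0,T] × [0,1]`, so by the fundamental
theorem of calculus and Fubini it may be taken under the integral sign.
-/

noncomputable section
open MeasureTheory

open Set
open scoped ContDiff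

section DotProduct

variable {n : ℕ}

lemma dotp_add_left (a b w : Fin n → ℝ) : dotp (a + b) w = dotp a w + dotp b w := by
  simp only [dotp, Pi.add_apply, add_mul, Finset.sum_add_distrib]

lemma dotp_lineStretch (X ξ : (Fin n → ℝ) → (Fin n → ℝ)) (x w : Fin n → ℝ) :
    dotp (lineStretch X ξ x) w = dotp (ξ x) (fderiv ℝ X x w) := by
  have hw : w = ∑ i, w i • (Pi.single i 1 : Fin n → ℝ) := by
    ext j
    simp [Pi.single_apply]
  conv_rhs => rw [hw]
  simp only [dotp, lineStretch, map_sum, map_smul, Finset.sum_apply, Pi.smul_apply, smul_eq_mul,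
    Finset.mul_sum, Finset.sum_mul]
  rw [Finset.sum_comm]
  exact Finset.sum_congr rfl fun _ _ => Finset.sum_congr rfl fun _ _ => by ring

lemma HasDerivWithinAt.dotp {u w : ℝ → Fin n → ℝ} {u' w' : Fin n → ℝ} {s : Set ℝ} {t : ℝ}
    (hu : HasDerivWithinAt u u' s t) (hw : HasDerivWithinAt w w' s t) :
    HasDerivWithinAt (fun τ => dotp (u τ) (w τ)) (dotp u' (w t) + dotp (u t) w') s t := by
  simp only [_root_.dotp, ← Finset.sum_add_distrib]
  exact HasDerivWithinAt.fun_sum fun i _ => (hasDerivWithinAt_pi.1 hu i).mul (hasDerivWithinAt_pi.1 hw i)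

variable {α : Type*} [TopologicalSpace α] {S : Set α}

lemma ContinuousOn.dotp {u w : α → Fin n → ℝ} (hu : ContinuousOn u S) (hw : ContinuousOn w S) :
    ContinuousOn (fun p => dotp (u p) (w p)) S :=
  continuousOn_finsetSum _ fun i _ => (continuousOn_pi.1 hu i).mul (continuousOn_pi.1 hw i)

lemma ContinuousOn.advDeriv {X ξ : α → (Fin n → ℝ) → (Fin n → ℝ)} {x : α → Fin n → ℝ}
    (hξ : ContinuousOn (fun p => fderiv ℝ (ξ p) (x p)) S) (hX : ContinuousOn (fun p => X p (x p)) S) :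
    ContinuousOn (fun p => advDeriv (X p) (ξ p) (x p)) S :=
  hξ.clm_apply hX

lemma ContinuousOn.lineStretch {X ξ : α → (Fin n → ℝ) → (Fin n → ℝ)} {x : α → Fin n → ℝ}
    (hX : ContinuousOn (fun p => fderiv ℝ (X p) (x p)) S) (hξ : ContinuousOn (fun p => ξ p (x p)) S) :
    ContinuousOn (fun p => lineStretch (X p) (ξ p) (x p)) S :=
  continuousOn_pi.2 fun i => continuousOn_finsetSum _ fun j _ =>
    (continuousOn_pi.1 (hX.clm_apply (continuousOn_const (c := Pi.single i 1))) j).mul (continuousOn_pi.1 hξ j)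

end DotProduct

section Slices

variable {𝕜 : Type*} [NontriviallyNormedField 𝕜]
  {E F G : Type*} [NormedAddCommGroup E] [NormedSpace 𝕜 E] [NormedAddCommGroup F] [NormedSpace 𝕜 F]
  [NormedAddCommGroup G] [NormedSpace 𝕜 G]

lemma HasFDerivWithinAt.comp_prodMk_left {f : E × F → G} {L : E × F →L[𝕜] G} {s : Set E}
    {t : Set F} {x : E} {y : F} (hf : HasFDerivWithinAt f L (s ×ˢ t) (x, y)) (hy : y ∈ t) :
    HasFDerivWithinAt (fun x' => f (x', y)) (L.comp (.inl 𝕜 E F)) s x :=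
  hf.comp x (hasFDerivAt_prodMk_left x y).hasFDerivWithinAt (s := s) fun _ hx' => mk_mem_prod hx' hy

lemma HasFDerivWithinAt.comp_prodMk_right {f : E × F → G} {L : E × F →L[𝕜] G} {s : Set E}
    {t : Set F} {x : E} {y : F} (hf : HasFDerivWithinAt f L (s ×ˢ t) (x, y)) (hx : x ∈ s) :
    HasFDerivWithinAt (fun y' => f (x, y')) (L.comp (.inr 𝕜 E F)) t y :=
  hf.comp y (hasFDerivAt_prodMk_right x y).hasFDerivWithinAt (s := t) fun _ hy' => mk_mem_prod hx hy'

lemma DifferentiableWithinAt.differentiableAt_comp_prodMk_right {f : E × F → G} {s : Set E}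
    {x : E} {y : F} (hf : DifferentiableWithinAt 𝕜 f (s ×ˢ univ) (x, y)) (hx : x ∈ s) :
    DifferentiableAt 𝕜 (fun y' => f (x, y')) y :=
  (hasFDerivWithinAt_univ.1 (hf.hasFDerivWithinAt.comp_prodMk_right hx)).differentiableAt

lemma ContDiffOn.continuousOn_derivWithin_comp_prodMk_left {f : 𝕜 × F → G} {s : Set 𝕜}
    {t : Set F} (hf : ContDiffOn 𝕜 1 f (s ×ˢ t)) (hst : UniqueDiffOn 𝕜 (s ×ˢ t))
    (hs : UniqueDiffOn 𝕜 s) :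
    ContinuousOn (fun z => derivWithin (fun a => f (a, z.2)) s z.1) (s ×ˢ t) := by
  refine ((hf.continuousOn_fderivWithin hst le_rfl).clm_apply
    (continuousOn_const (c := ((1 : 𝕜), (0 : F))))).congr fun z hz => ?_
  have hd := ((hf.differentiableOn one_ne_zero z hz).hasFDerivWithinAt.comp_prodMk_left hz.2)
  exact hd.hasDerivWithinAt.derivWithin (hs z.1 hz.1)

lemma ContDiffOn.continuousOn_derivWithin_comp_prodMk_right {f : E × 𝕜 → G} {s : Set E}
    {t : Set 𝕜} (hf : ContDiffOn 𝕜 1 f (s ×ˢ t)) (hst : UniqueDiffOn 𝕜 (s ×ˢ t))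
    (ht : UniqueDiffOn 𝕜 t) :
    ContinuousOn (fun z => derivWithin (fun b => f (z.1, b)) t z.2) (s ×ˢ t) := by
  refine ((hf.continuousOn_fderivWithin hst le_rfl).clm_apply
    (continuousOn_const (c := ((0 : E), (1 : 𝕜))))).congr fun z hz => ?_
  have hd := ((hf.differentiableOn one_ne_zero z hz).hasFDerivWithinAt.comp_prodMk_right hz.1)
  exact hd.hasDerivWithinAt.derivWithin (ht z.2 hz.2)

lemma ContDiffOn.continuousOn_fderiv_comp_prodMk_right {f : E × F → G} {s : Set E}
    (hf : ContDiffOn 𝕜 1 f (s ×ˢ univ)) (hs : UniqueDiffOn 𝕜 s) :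
    ContinuousOn (fun z => fderiv 𝕜 (fun y => f (z.1, y)) z.2) (s ×ˢ univ) := by
  refine ((hf.continuousOn_fderivWithin (hs.prod uniqueDiffOn_univ) le_rfl).clm_comp
    (continuousOn_const (c := ContinuousLinearMap.inr 𝕜 E F))).congr fun z hz => ?_
  have hd := ((hf.differentiableOn one_ne_zero z hz).hasFDerivWithinAt.comp_prodMk_right hz.1)
  exact (hasFDerivWithinAt_univ.1 hd).fderiv

end Slices

section TotalDerivative

variable {𝕜 : Type*} [NontriviallyNormedField 𝕜]
  {E F : Type*} [NormedAddCommGroup E] [NormedSpace 𝕜 E] [NormedAddCommGroup F] [NormedSpace 𝕜 F]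

lemma DifferentiableWithinAt.hasDerivWithinAt_comp_graph {Φ : 𝕜 → E → F} {γ : 𝕜 → E} {w : E}
    {s : Set 𝕜} {t : 𝕜}
    (hΦ : DifferentiableWithinAt 𝕜 (fun z : 𝕜 × E => Φ z.1 z.2) (s ×ˢ univ) (t, γ t))
    (hγ : HasDerivWithinAt γ w s t) (hts : t ∈ s) (hs : UniqueDiffWithinAt 𝕜 s t) :
    HasDerivWithinAt (fun τ => Φ τ (γ τ))
      (derivWithin (fun τ => Φ τ (γ t)) s t + fderiv 𝕜 (Φ t) (γ t) w) s t := by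
  have hL := hΦ.hasFDerivWithinAt
  have hgraph : HasDerivWithinAt (fun τ => (τ, γ τ)) (1, w) s t :=
    (hasDerivWithinAt_id t s).prodMk hγ
  have h := hL.comp_hasDerivWithinAt t hgraph fun τ hτ => mk_mem_prod hτ (mem_univ (γ τ))
  have h₁ := (hL.comp_prodMk_left (mem_univ (γ t))).hasDerivWithinAt.derivWithin hs
  have h₂ := (hasFDerivWithinAt_univ.1 (hL.comp_prodMk_right hts)).fderiv
  beta_reduce at h₁ h₂
  rw [h₁, h₂, ContinuousLinearMap.comp_apply, ContinuousLinearMap.comp_apply, ← map_add]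
  have hsum : ContinuousLinearMap.inl 𝕜 𝕜 E 1 + ContinuousLinearMap.inr 𝕜 𝕜 E w = (1, w) := by
    ext <;> simp
  rw [hsum]
  exact h

end TotalDerivative

section MixedPartials

variable {E : Type*} [NormedAddCommGroup E] [NormedSpace ℝ E]

lemma ContDiffOn.hasDerivWithinAt_derivWithin_comm {f : ℝ × ℝ → E} {a b c d τ s : ℝ}
    (hf : ContDiffOn ℝ 2 f (Icc a b ×ˢ Icc c d)) (hab : a < b) (hcd : c < d)
    (hτ : τ ∈ Icc a b) (hs : s ∈ Icc c d) :
    HasDerivWithinAt (fun τ' => derivWithin (fun σ => f (τ', σ)) (Icc c d) s)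
      (derivWithin (fun σ => derivWithin (fun τ' => f (τ', σ)) (Icc a b) τ) (Icc c d) s)
      (Icc a b) τ := by
  set S := Icc a b ×ˢ Icc c d
  have hS : UniqueDiffOn ℝ S := (uniqueDiffOn_Icc hab).prod (uniqueDiffOn_Icc hcd)
  have hp : (τ, s) ∈ S := ⟨hτ, hs⟩
  set Df := fderivWithin ℝ f S
  have hpart₁ : ∀ p ∈ S, derivWithin (fun τ' => f (τ', p.2)) (Icc a b) p.1 = Df p (1, 0) :=
    fun p hp => ((hf.differentiableOn two_ne_zero p hp).hasFDerivWithinAt.comp_prodMk_left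
      hp.2).hasDerivWithinAt.derivWithin (uniqueDiffOn_Icc hab _ hp.1)
  have hpart₂ : ∀ p ∈ S, derivWithin (fun σ => f (p.1, σ)) (Icc c d) p.2 = Df p (0, 1) :=
    fun p hp => ((hf.differentiableOn two_ne_zero p hp).hasFDerivWithinAt.comp_prodMk_right
      hp.1).hasDerivWithinAt.derivWithin (uniqueDiffOn_Icc hcd _ hp.2)
  set D2f := fderivWithin ℝ Df S (τ, s)
  have hD2f : HasFDerivWithinAt Df D2f S (τ, s) :=
    ((hf.fderivWithin hS le_rfl).differentiableOn one_ne_zero _ hp).hasFDerivWithinAt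
  have hDf_apply (u : ℝ × ℝ) : HasFDerivWithinAt (fun q => Df q u)
      ((ContinuousLinearMap.apply ℝ E u).comp D2f) S (τ, s) :=
    (ContinuousLinearMap.apply ℝ E u).hasFDerivAt.comp_hasFDerivWithinAt _ hD2f
  have h₁ := ((hDf_apply (1, 0)).comp_prodMk_right hτ).hasDerivWithinAt
  have h₂ := ((hDf_apply (0, 1)).comp_prodMk_left hs).hasDerivWithinAt
  have hcl : closure (interior S) = S := by
    rw [interior_prod_eq, interior_Icc, interior_Icc, closure_prod_eq, closure_Ioo hab.ne,
      closure_Ioo hcd.ne]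
  have hsymm : D2f (1, 0) (0, 1) = D2f (0, 1) (1, 0) :=
    (hf.contDiffWithinAt hp).isSymmSndFDerivWithinAt (by simp) hS (by rw [hcl]; exact hp) hp _ _
  rw [derivWithin_congr (fun σ hσ => hpart₁ (τ, σ) ⟨hτ, hσ⟩) (hpart₁ _ hp),
    h₁.derivWithin (uniqueDiffOn_Icc hcd s hs)]
  refine HasDerivWithinAt.congr ?_ (fun τ' hτ' => hpart₂ (τ', s) ⟨hτ', hs⟩) (hpart₂ _ hp)
  convert h₂ using 1
  exact hsymm.symm

end MixedPartials

section Leibniz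

variable {E : Type*} [NormedAddCommGroup E] [NormedSpace ℝ E] [CompleteSpace E]
  {F R : ℝ → ℝ → E} {a b c d t : ℝ}

lemma hasDerivWithinAt_intervalIntegral_of_continuous (hcd : c ≤ d)
    (hF : ∀ τ ∈ Icc a b, ∀ s ∈ Icc c d, HasDerivWithinAt (F · s) (R τ s) (Icc a b) τ)
    (hR : Continuous R.uncurry) (hFa : IntervalIntegrable (F a) volume c d) (ht : t ∈ Icc a b) :
    HasDerivWithinAt (fun τ => ∫ s in c..d, F τ s) (∫ s in c..d, R t s) (Icc a b) t := by
  have hrepr : ∀ τ ∈ Icc a b,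
      ∫ s in c..d, F τ s = (∫ s in c..d, F a s) + ∫ u in a..τ, ∫ s in c..d, R u s := by
    intro τ hτ
    have hFTC : ∀ s ∈ uIcc c d, F τ s = F a s + ∫ u in a..τ, R u s := by
      intro s hs
      rw [uIcc_of_le hcd] at hs
      have hcont : ContinuousOn (F · s) (Icc a τ) := fun u hu =>
        (hF u ⟨hu.1, hu.2.trans hτ.2⟩ s hs).continuousWithinAt.mono (Icc_subset_Icc_right hτ.2)
      rw [intervalIntegral.integral_eq_sub_of_hasDeriv_right_of_le hτ.1 hcont
        (fun u hu => ((hF u ⟨hu.1.le, hu.2.le.trans hτ.2⟩ s hs).hasDerivAt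
          (Icc_mem_nhds hu.1 (hu.2.trans_le hτ.2))).hasDerivWithinAt)
        ((hR.comp (continuous_id.prodMk continuous_const)).intervalIntegrable _ _)]
      abel
    have hprim : Continuous fun s => ∫ u in a..τ, R u s :=
      intervalIntegral.continuous_parametric_intervalIntegral_of_continuous'
        (f := fun s u => R u s) (hR.comp continuous_swap) a τ
    rw [intervalIntegral.integral_congr hFTC,
      intervalIntegral.integral_add hFa (hprim.intervalIntegrable _ _),
      ← intervalIntegral_intervalIntegral_swap
        ((hR.continuousOn.integrableOn_compact (isCompact_uIcc.prod isCompact_uIcc)).mono_set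
          (prod_mono uIoc_subset_uIcc uIoc_subset_uIcc))]
  have hΨ : Continuous fun u => ∫ s in c..d, R u s :=
    intervalIntegral.continuous_parametric_intervalIntegral_of_continuous' hR c d
  exact ((hΨ.integral_hasStrictDerivAt a t).hasDerivAt.hasDerivWithinAt.const_add _).congr
    hrepr (hrepr t ht)

lemma hasDerivWithinAt_intervalIntegral_of_continuousOn (hcd : c ≤ d)
    (hF : ∀ τ ∈ Icc a b, ∀ s ∈ Icc c d, HasDerivWithinAt (F · s) (R τ s) (Icc a b) τ)
    (hR : ContinuousOn R.uncurry (Icc a b ×ˢ Icc c d)) (hFa : IntervalIntegrable (F a) volume c d)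
    (ht : t ∈ Icc a b) :
    HasDerivWithinAt (fun τ => ∫ s in c..d, F τ s) (∫ s in c..d, R t s) (Icc a b) t := by
  have hab : a ≤ b := ht.1.trans ht.2
  -- extend `R` continuously to the plane by clamping both arguments to the rectangle
  set R' : ℝ → ℝ → E := fun u s => R (projIcc a b hab u) (projIcc c d hcd s)
  have hR' : Continuous R'.uncurry :=
    hR.comp_continuous (f := fun p : ℝ × ℝ => ((projIcc a b hab p.1 : ℝ), (projIcc c d hcd p.2 : ℝ)))
      (by fun_prop) fun p => ⟨(projIcc a b hab p.1).2, (projIcc c d hcd p.2).2⟩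
  have hRR' : ∀ u ∈ Icc a b, ∀ s ∈ Icc c d, R' u s = R u s := fun u hu s hs => by
    simp only [R', projIcc_of_mem _ hu, projIcc_of_mem _ hs]
  have h := hasDerivWithinAt_intervalIntegral_of_continuous hcd
    (fun τ hτ s hs => hRR' τ hτ s hs ▸ hF τ hτ s hs) hR' hFa ht
  rwa [intervalIntegral.integral_congr fun s hs => hRR' t ht s (uIcc_of_le hcd ▸ hs)] at h

end Leibniz

section Kelvin

variable {n : ℕ} {T : ℝ} {v ξ g : ℝ → (Fin n → ℝ) → (Fin n → ℝ)} {c : ℝ → Fin n → ℝ}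

def circulationIntegrand (ξ g : ℝ → (Fin n → ℝ) → (Fin n → ℝ)) (c : ℝ → Fin n → ℝ) (τ s : ℝ) :
    ℝ :=
  dotp (ξ τ (g τ (c s))) (derivWithin (fun σ => g τ (c σ)) (Icc 0 1) s)

def transportedIntegrand (T : ℝ) (v ξ g : ℝ → (Fin n → ℝ) → (Fin n → ℝ)) (c : ℝ → Fin n → ℝ)
    (τ s : ℝ) : ℝ :=
  dotp (derivWithin (fun τ' => ξ τ' (g τ (c s))) (Icc 0 T) τ
      + advDeriv (v τ) (ξ τ) (g τ (c s)) + lineStretch (v τ) (ξ τ) (g τ (c s)))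
    (derivWithin (fun σ => g τ (c σ)) (Icc 0 1) s)

lemma contDiffOn_comp_curve {k : ℕ∞ω}
    (hg : ContDiffOn ℝ k (fun z : ℝ × (Fin n → ℝ) => g z.1 z.2) (Icc 0 T ×ˢ univ))
    (hc : ContDiffOn ℝ k c (Icc 0 1)) :
    ContDiffOn ℝ k (fun p : ℝ × ℝ => g p.1 (c p.2)) (Icc 0 T ×ˢ Icc 0 1) :=
  hg.comp (contDiffOn_fst.prodMk (hc.comp contDiffOn_snd fun _ hp => hp.2))
    fun _ hp => ⟨hp.1, mem_univ _⟩

lemma continuousOn_derivWithin_comp_curve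
    (hg : ContDiffOn ℝ 1 (fun z : ℝ × (Fin n → ℝ) => g z.1 z.2) (Icc 0 T ×ˢ univ))
    (hc : ContDiffOn ℝ 1 c (Icc 0 1)) (hT : 0 < T) :
    ContinuousOn (fun p : ℝ × ℝ => derivWithin (fun σ => g p.1 (c σ)) (Icc 0 1) p.2)
      (Icc 0 T ×ˢ Icc 0 1) :=
  (contDiffOn_comp_curve hg hc).continuousOn_derivWithin_comp_prodMk_right
    ((uniqueDiffOn_Icc hT).prod (uniqueDiffOn_Icc one_pos)) (uniqueDiffOn_Icc one_pos)

lemma hasDerivWithinAt_derivWithin_comp_curve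
    (hv : ContDiffOn ℝ 1 (fun z : ℝ × (Fin n → ℝ) => v z.1 z.2) (Icc 0 T ×ˢ univ))
    (hg : ContDiffOn ℝ 2 (fun z : ℝ × (Fin n → ℝ) => g z.1 z.2) (Icc 0 T ×ˢ univ))
    (hc : ContDiffOn ℝ 2 c (Icc 0 1)) (hT : 0 < T)
    (hflow : ∀ t ∈ Icc (0:ℝ) T, ∀ x, derivWithin (fun τ => g τ x) (Icc 0 T) t = v t (g t x))
    {τ s : ℝ} (hτ : τ ∈ Icc 0 T) (hs : s ∈ Icc 0 1) :
    HasDerivWithinAt (fun τ' => derivWithin (fun σ => g τ' (c σ)) (Icc 0 1) s)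
      (fderiv ℝ (v τ) (g τ (c s)) (derivWithin (fun σ => g τ (c σ)) (Icc 0 1) s)) (Icc 0 T) τ := by
  have hH := contDiffOn_comp_curve hg hc
  have hcomm := hH.hasDerivWithinAt_derivWithin_comm hT one_pos hτ hs
  have hcurve : DifferentiableWithinAt ℝ (fun σ => g τ (c σ)) (Icc 0 1) s :=
    ((hH.differentiableOn two_ne_zero _ ⟨hτ, hs⟩).hasFDerivWithinAt.comp_prodMk_right
      hτ).differentiableWithinAt
  have hvτ : DifferentiableAt ℝ (v τ) (g τ (c s)) :=
    (hv.differentiableOn one_ne_zero _ ⟨hτ, mem_univ _⟩).differentiableAt_comp_prodMk_right hτ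
  have hvel : derivWithin (fun σ => derivWithin (fun τ' => g τ' (c σ)) (Icc 0 T) τ) (Icc 0 1) s
      = fderiv ℝ (v τ) (g τ (c s)) (derivWithin (fun σ => g τ (c σ)) (Icc 0 1) s) := by
    rw [derivWithin_congr (fun σ _ => hflow τ hτ (c σ)) (hflow τ hτ (c s))]
    exact (hvτ.hasFDerivAt.comp_hasDerivWithinAt s hcurve.hasDerivWithinAt).derivWithin
      (uniqueDiffOn_Icc one_pos s hs)
  rwa [hvel] at hcomm

lemma hasDerivWithinAt_circulationIntegrand
    (hv : ContDiffOn ℝ 1 (fun z : ℝ × (Fin n → ℝ) => v z.1 z.2) (Icc 0 T ×ˢ univ))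
    (hξ : ContDiffOn ℝ 1 (fun z : ℝ × (Fin n → ℝ) => ξ z.1 z.2) (Icc 0 T ×ˢ univ))
    (hg : ContDiffOn ℝ 2 (fun z : ℝ × (Fin n → ℝ) => g z.1 z.2) (Icc 0 T ×ˢ univ))
    (hc : ContDiffOn ℝ 2 c (Icc 0 1)) (hT : 0 < T)
    (hflow : ∀ t ∈ Icc (0:ℝ) T, ∀ x, derivWithin (fun τ => g τ x) (Icc 0 T) t = v t (g t x))
    {τ s : ℝ} (hτ : τ ∈ Icc 0 T) (hs : s ∈ Icc 0 1) :
    HasDerivWithinAt (circulationIntegrand ξ g c · s) (transportedIntegrand T v ξ g c τ s)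
      (Icc 0 T) τ := by
  have hpath : HasDerivWithinAt (fun τ' => g τ' (c s)) (v τ (g τ (c s))) (Icc 0 T) τ := by
    rw [← hflow τ hτ (c s)]
    exact ((hg.differentiableOn two_ne_zero _ ⟨hτ, mem_univ _⟩).hasFDerivWithinAt.comp_prodMk_left
      (mem_univ (c s))).differentiableWithinAt.hasDerivWithinAt
  have hξpath := (hξ.differentiableOn one_ne_zero _ ⟨hτ, mem_univ _⟩).hasDerivWithinAt_comp_graph
    hpath hτ (uniqueDiffOn_Icc hT τ hτ)
  have h := hξpath.dotp (hasDerivWithinAt_derivWithin_comp_curve hv hg hc hT hflow hτ hs)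
  rw [transportedIntegrand, dotp_add_left, dotp_lineStretch]
  exact h

lemma continuousOn_transportedIntegrand
    (hv : ContDiffOn ℝ 1 (fun z : ℝ × (Fin n → ℝ) => v z.1 z.2) (Icc 0 T ×ˢ univ))
    (hξ : ContDiffOn ℝ 1 (fun z : ℝ × (Fin n → ℝ) => ξ z.1 z.2) (Icc 0 T ×ˢ univ))
    (hg : ContDiffOn ℝ 1 (fun z : ℝ × (Fin n → ℝ) => g z.1 z.2) (Icc 0 T ×ˢ univ))
    (hc : ContDiffOn ℝ 1 c (Icc 0 1)) (hT : 0 < T) :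
    ContinuousOn (transportedIntegrand T v ξ g c).uncurry (Icc 0 T ×ˢ Icc 0 1) := by
  have hI := uniqueDiffOn_Icc hT
  set S := Icc (0:ℝ) T ×ˢ Icc (0:ℝ) 1
  have hgraph : ContinuousOn (fun p : ℝ × ℝ => (p.1, g p.1 (c p.2))) S :=
    continuousOn_fst.prodMk (contDiffOn_comp_curve hg hc).continuousOn
  have hmaps : MapsTo (fun p : ℝ × ℝ => (p.1, g p.1 (c p.2))) S (Icc 0 T ×ˢ univ) :=
    fun _ hp => ⟨hp.1, mem_univ _⟩
  have hξt : ContinuousOn (fun p : ℝ × ℝ =>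
      derivWithin (fun τ' => ξ τ' (g p.1 (c p.2))) (Icc 0 T) p.1) S :=
    (hξ.continuousOn_derivWithin_comp_prodMk_left (hI.prod uniqueDiffOn_univ) hI).comp hgraph hmaps
  have hξx : ContinuousOn (fun p : ℝ × ℝ => fderiv ℝ (ξ p.1) (g p.1 (c p.2))) S :=
    (hξ.continuousOn_fderiv_comp_prodMk_right hI).comp hgraph hmaps
  have hvx : ContinuousOn (fun p : ℝ × ℝ => fderiv ℝ (v p.1) (g p.1 (c p.2))) S :=
    (hv.continuousOn_fderiv_comp_prodMk_right hI).comp hgraph hmaps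
  exact ((hξt.add (hξx.advDeriv (hv.continuousOn.comp hgraph hmaps))).add
    (hvx.lineStretch (hξ.continuousOn.comp hgraph hmaps))).dotp
    (continuousOn_derivWithin_comp_curve hg hc hT)

lemma intervalIntegrable_circulationIntegrand
    (hξ : ContinuousOn (fun z : ℝ × (Fin n → ℝ) => ξ z.1 z.2) (Icc 0 T ×ˢ univ))
    (hg : ContDiffOn ℝ 1 (fun z : ℝ × (Fin n → ℝ) => g z.1 z.2) (Icc 0 T ×ˢ univ))
    (hc : ContDiffOn ℝ 1 c (Icc 0 1)) (hT : 0 < T) {τ : ℝ} (hτ : τ ∈ Icc 0 T) :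
    IntervalIntegrable (circulationIntegrand ξ g c τ) volume 0 1 := by
  have hslice : MapsTo (fun s : ℝ => (τ, s)) (Icc 0 1) (Icc 0 T ×ˢ Icc 0 1) :=
    fun _ hs => ⟨hτ, hs⟩
  have hcurve := (contDiffOn_comp_curve hg hc).continuousOn.comp (by fun_prop) hslice
  refine ContinuousOn.intervalIntegrable_of_Icc zero_le_one (ContinuousOn.dotp ?_
    ((continuousOn_derivWithin_comp_curve hg hc hT).comp (by fun_prop) hslice))
  exact hξ.comp (continuousOn_const.prodMk hcurve) fun _ _ => ⟨hτ, mem_univ _⟩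

end Kelvin

/-- deterministic transport identity behind the Kelvin
Circulation Theorem: with `∂_t g(t,x) = v(t,g(t,x))`,
`d/dt ∫₀¹ ⟨ξ(t,g(t,c(s))), ∂_s g(t,c(s))⟩ ds
  = ∫₀¹ ⟨(∂_tξ + ∇_vξ + v'⊗ξ)(t,g(t,c(s))), ∂_s g(t,c(s))⟩ ds`. -/
theorem stmt17 {n : ℕ} (T : ℝ) (hT : 0 < T)
    (v ξ g : ℝ → (Fin n → ℝ) → (Fin n → ℝ)) (c : ℝ → Fin n → ℝ)
    (hv : ContDiffOn ℝ (⊤:ℕ∞) (fun z : ℝ × (Fin n → ℝ) => v z.1 z.2)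
      (Set.Icc 0 T ×ˢ Set.univ))
    (hξ : ContDiffOn ℝ (⊤:ℕ∞) (fun z : ℝ × (Fin n → ℝ) => ξ z.1 z.2)
      (Set.Icc 0 T ×ˢ Set.univ))
    (hg : ContDiffOn ℝ (⊤:ℕ∞) (fun z : ℝ × (Fin n → ℝ) => g z.1 z.2)
      (Set.Icc 0 T ×ˢ Set.univ))
    (hc : ContDiffOn ℝ (⊤:ℕ∞) c (Set.Icc 0 1))
    (hflow : ∀ t ∈ Set.Icc (0:ℝ) T, ∀ x,
      derivWithin (fun τ => g τ x) (Set.Icc 0 T) t = v t (g t x)) :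
    ∀ t ∈ Set.Icc (0:ℝ) T,
      HasDerivWithinAt
        (fun τ => ∫ s in (0:ℝ)..1,
          dotp (ξ τ (g τ (c s))) (derivWithin (fun σ => g τ (c σ)) (Set.Icc 0 1) s))
        (∫ s in (0:ℝ)..1,
          dotp (derivWithin (fun τ => ξ τ (g t (c s))) (Set.Icc 0 T) t
                  + advDeriv (v t) (ξ t) (g t (c s))
                  + lineStretch (v t) (ξ t) (g t (c s)))
               (derivWithin (fun σ => g t (c σ)) (Set.Icc 0 1) s))
        (Set.Icc 0 T) t := by
  intro t ht
  have h1 : (1 : ℕ∞ω) ≤ (⊤ : ℕ∞) := WithTop.coe_le_coe.mpr le_top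
  have h2 : (2 : ℕ∞ω) ≤ (⊤ : ℕ∞) := WithTop.coe_le_coe.mpr le_top
  exact hasDerivWithinAt_intervalIntegral_of_continuousOn (F := circulationIntegrand ξ g c)
    zero_le_one
    (fun τ hτ s hs => hasDerivWithinAt_circulationIntegrand (hv.of_le h1) (hξ.of_le h1)
      (hg.of_le h2) (hc.of_le h2) hT hflow hτ hs)
    (continuousOn_transportedIntegrand (hv.of_le h1) (hξ.of_le h1) (hg.of_le h1) (hc.of_le h1) hT)
    (intervalIntegrable_circulationIntegrand hξ.continuousOn (hg.of_le h1) (hc.of_le h1) hT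
      ⟨le_rfl, hT.le⟩) ht
end
end
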